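/- Let m ≥ 5 be odd, η as above, and σ ∈ F_{q^2} with σ^q + ασ + β = 0 for nonzero α, β ∈ F_q, σ ∉ F_q. Then for any even i with 2 ≤ i ≤ m - 3, the 2-dimensional subspace spanned by e_i + (ασ + β)e_{i+3} and σe_{i+1} + e_{i+2} is totally isotropic for η. -/

import Mathlib

/-! Write `L = ασ + β`. The relation says `L = -σ^q`, and since `x ↦ x^q` is an involution of
`F_{q^2}` with `(-1)^q = -1`, also `L^q = -σ`. Both spanning vectors are supported on the two
hyperbolic pairs `(e_i, e_{i+1})` and `(e_{i+2}, e_{i+3})`, so for `u = a v₁ + b v₂` and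
`v = c v₁ + d v₂` only those pairs contribute and
`η(u, v) = a^q d (σ + L^q) + b^q c (σ^q + L) = 0`.
The vectors are independent because of their coordinates at `e_i` and `e_{i+2}`. -/

open Finset

section FiniteField

variable {F : Type*} [Field F] [Fintype F] {q : ℕ}

theorem pow_pow_eq_self_of_card_eq_sq (hF : Fintype.card F = q ^ 2) (x : F) :
    (x ^ q) ^ q = x := by
  rw [← pow_mul, ← sq, ← hF, FiniteField.pow_card]

theorem neg_one_pow_eq_neg_one_of_card_eq_sq (hF : Fintype.card F = q ^ 2) :
    (-1 : F) ^ q = -1 := by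
  have hsq : (-1 : F) ^ q * (-1) ^ q = 1 := by rw [← mul_pow, neg_one_mul, neg_neg, one_pow]
  rcases mul_self_eq_one_iff.mp hsq with h | h
  · -- then `-1 = ((-1)^q)^q = 1`
    rw [h, ← pow_pow_eq_self_of_card_eq_sq hF (-1), h, one_pow]
  · exact h

theorem neg_pow_pow_eq_neg_of_card_eq_sq (hF : Fintype.card F = q ^ 2) (x : F) :
    (-x ^ q) ^ q = -x := by
  rw [neg_pow, neg_one_pow_eq_neg_one_of_card_eq_sq hF, pow_pow_eq_self_of_card_eq_sq hF,
    neg_one_mul]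

end FiniteField

variable {F : Type*} [Field F]

/-- The form `η`, in the 0-based coordinates of `Fin m`. -/
def hermitianForm (q m : ℕ) (hm : 0 < m) (X Y : Fin m → F) : F :=
  X ⟨0, hm⟩ ^ q * Y ⟨0, hm⟩ +
    ∑ i ∈ range ((m - 1) / 2),
      if h : 2 * i + 2 < m then
        X ⟨2 * i + 1, by omega⟩ ^ q * Y ⟨2 * i + 2, h⟩ +
          X ⟨2 * i + 2, h⟩ ^ q * Y ⟨2 * i + 1, by omega⟩
      else 0

theorem hermitianForm_eq_of_support {q m j : ℕ} (hm : 0 < m) (hjm : 2 * j + 5 ≤ m)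
    (X Y : Fin m → F) (hY : ∀ t : Fin m, ((t : ℕ) < 2 * j + 1 ∨ 2 * j + 4 < t) → Y t = 0) :
    hermitianForm q m hm X Y =
      X ⟨2 * j + 1, by omega⟩ ^ q * Y ⟨2 * j + 2, by omega⟩ +
        X ⟨2 * j + 2, by omega⟩ ^ q * Y ⟨2 * j + 1, by omega⟩ +
      (X ⟨2 * j + 3, by omega⟩ ^ q * Y ⟨2 * j + 4, by omega⟩ +
        X ⟨2 * j + 4, by omega⟩ ^ q * Y ⟨2 * j + 3, by omega⟩) := by
  have hpair : ∀ k (hk : 2 * k + 2 < m), k ≠ j → k ≠ j + 1 →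
      X ⟨2 * k + 1, by omega⟩ ^ q * Y ⟨2 * k + 2, by omega⟩ +
        X ⟨2 * k + 2, by omega⟩ ^ q * Y ⟨2 * k + 1, by omega⟩ = 0 := by
    intro k hk hkj hkj'
    rw [hY ⟨2 * k + 1, by omega⟩ (by dsimp; omega), hY ⟨2 * k + 2, hk⟩ (by dsimp; omega)]
    ring
  rw [hermitianForm, hY ⟨0, hm⟩ (by simp), mul_zero, zero_add,
    sum_eq_add_of_mem j (j + 1) (mem_range.2 (by omega)) (mem_range.2 (by omega)) (by omega)
      (fun k _ hk => by split_ifs with h; exacts [hpair k h hk.1 hk.2, rfl]),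
    dif_pos (by omega), dif_pos (by omega)]
  rfl

/-- `e_k`, indexed from `1` as in the paper; it is `0` when `k = 0` or `k > m`. -/
def unitVec (m k : ℕ) : Fin m → F := fun t => if (t : ℕ) + 1 = k then 1 else 0

/-- Entries `x₁, …, x₄` at the 0-based coordinates `2j+1, …, 2j+4`, i.e. on the hyperbolic
pairs `j` and `j + 1` of `hermitianForm`. -/
def blockVec (m j : ℕ) (x₁ x₂ x₃ x₄ : F) : Fin m → F := fun t =>
  if (t : ℕ) = 2 * j + 1 then x₁ else if (t : ℕ) = 2 * j + 2 then x₂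
  else if (t : ℕ) = 2 * j + 3 then x₃ else if (t : ℕ) = 2 * j + 4 then x₄ else 0

theorem hermitianForm_blockVec {q m j : ℕ} (hm : 0 < m) (hjm : 2 * j + 5 ≤ m)
    (x₁ x₂ x₃ x₄ y₁ y₂ y₃ y₄ : F) :
    hermitianForm q m hm (blockVec m j x₁ x₂ x₃ x₄) (blockVec m j y₁ y₂ y₃ y₄) =
      x₁ ^ q * y₂ + x₂ ^ q * y₁ + (x₃ ^ q * y₄ + x₄ ^ q * y₃) := by
  rw [hermitianForm_eq_of_support hm hjm]
  · simp [blockVec]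
  · intro t ht
    simp only [blockVec]
    split_ifs <;> first | rfl | omega

theorem smul_add_smul_eq_blockVec {m i j : ℕ} (hij : i = 2 * j + 2) (L σ a b : F) :
    a • (unitVec m i + L • unitVec m (i + 3)) + b • (σ • unitVec m (i + 1) + unitVec m (i + 2)) =
      blockVec m j a (b * σ) b (a * L) := by
  subst hij
  funext t
  simp only [unitVec, blockVec, Pi.add_apply, Pi.smul_apply, smul_eq_mul]
  split_ifs <;> first | omega | ring

theorem finrank_span_pair_of_linearIndependent {K V : Type*} [DivisionRing K] [AddCommGroup V]
    [Module K V] {x y : V} (h : LinearIndependent K ![x, y]) :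
    Module.finrank K (Submodule.span K {x, y}) = 2 := by
  rw [← Matrix.range_cons_cons_empty, finrank_span_eq_card h, Fintype.card_fin]

/-- Let `m ≥ 5` be odd, `η` the standard Hermitian form, and `σ ∈ F_{q^2} \ F_q` with
`σ^q + ασ + β = 0` for nonzero `α, β ∈ F_q`. For any even `i` (1-based) with
`2 ≤ i ≤ m-3`, the 2-dimensional subspace spanned by `e_i + (ασ+β)e_{i+3}` and
`σe_{i+1} + e_{i+2}` is totally isotropic for `η`. -/
theorem stmt_15 (q m : ℕ) (hm : Odd m)
    (F : Type) [Field F] [Fintype F] (hF : Fintype.card F = q ^ 2)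
    (η : (Fin m → F) → (Fin m → F) → F)
    (hη : ∀ X Y, η X Y =
      (X ⟨0, hm.pos⟩) ^ q * Y ⟨0, hm.pos⟩ +
        ∑ i ∈ Finset.range ((m - 1) / 2),
          if h : 2 * i + 2 < m then
            (X ⟨2 * i + 1, by omega⟩) ^ q * Y ⟨2 * i + 2, h⟩ +
              (X ⟨2 * i + 2, h⟩) ^ q * Y ⟨2 * i + 1, by omega⟩
          else 0)
    (e : ℕ → Fin m → F)
    (he : ∀ i, e i = fun k : Fin m => if (k : ℕ) + 1 = i then (1 : F) else 0)
    (α β σ : F) (hrel : σ ^ q + α * σ + β = 0)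
    (i : ℕ) (hieven : Even i) (hi2 : 2 ≤ i) (hi : i ≤ m - 3) :
    Module.finrank F
        (Submodule.span F {e i + (α * σ + β) • e (i + 3), σ • e (i + 1) + e (i + 2)}) = 2 ∧
    ∀ u ∈ Submodule.span F {e i + (α * σ + β) • e (i + 3), σ • e (i + 1) + e (i + 2)},
      ∀ v ∈ Submodule.span F {e i + (α * σ + β) • e (i + 3), σ • e (i + 1) + e (i + 2)},
        η u v = 0 := by
  obtain ⟨j, hij⟩ : ∃ j, i = 2 * j + 2 := ⟨i / 2 - 1, by obtain ⟨r, rfl⟩ := hieven; omega⟩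
  have hjm : 2 * j + 5 ≤ m := by omega
  obtain rfl : e = unitVec m := funext he
  obtain rfl : η = hermitianForm q m hm.pos := funext fun X => funext fun Y => hη X Y
  have hcomb := smul_add_smul_eq_blockVec (m := m) hij (α * σ + β) σ
  have hL : α * σ + β = -σ ^ q := by linear_combination hrel
  refine ⟨finrank_span_pair_of_linearIndependent (LinearIndependent.pair_iff.2 fun a b h => ?_), ?_⟩
  · rw [hcomb] at h
    exact ⟨by simpa [blockVec] using congrFun h ⟨2 * j + 1, by omega⟩,
      by simpa [blockVec] using congrFun h ⟨2 * j + 3, by omega⟩⟩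
  · intro u hu v hv
    obtain ⟨a, b, rfl⟩ := Submodule.mem_span_pair.1 hu
    obtain ⟨c, d, rfl⟩ := Submodule.mem_span_pair.1 hv
    rw [hcomb, hcomb, hermitianForm_blockVec hm.pos hjm, mul_pow, mul_pow, hL,
      neg_pow_pow_eq_neg_of_card_eq_sq hF]
    ring
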